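/- arXiv:2001.08117 — 2 statements merged into one kernel-verified Lean document; each statement's English description precedes it below -/
import Mathlib

section
/- Let p be a prime, s ∈ ℤ_{≥1}, a ∈ ℤ_p ∖ ℤ_{≤0}, and let (B_n)_{n≥0} be elements of W such that the function n ↦ B_n/A_n is Lipschitz. For m ∈ ℤ_{≥0} and n ∈ ℤ_{≥1} put S_m := Σ_{i+j=m, i,j≥0} (A_{i+p^n} B_j − A_i B_{j+p^n}). Then S_m ≡ Σ_{i+j=m} (A^{(1)}_{⌊j/p⌋} A^{(1)}_{⌊i/p⌋+p^{n−1}} − A^{(1)}_{⌊i/p⌋} A^{(1)}_{⌊j/p⌋+p^{n−1}}) · (A_i/A^{(1)}_{⌊i/p⌋}) · (A_j/A^{(1)}_{⌊j/p⌋}) · (B_j/A_j) mod p^n W (here the ratios A_i/A^{(1)}_{⌊i/p⌋} lie in ℤ_p). -/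
open scoped Classical

namespace HGP

/-- `𝔽̄_p`, an algebraic closure of the prime field `𝔽_p`. -/
abbrev Fbar (p : ℕ) [Fact p.Prime] : Type _ := AlgebraicClosure (ZMod p)

/-- `W = W(𝔽̄_p)`, the ring of Witt vectors of `𝔽̄_p`. -/
abbrev Wp (p : ℕ) [Fact p.Prime] : Type _ := WittVector p (Fbar p)

/-- `K = Frac W`. -/
abbrev Kp (p : ℕ) [Fact p.Prime] : Type _ := FractionRing (Wp p)

/-- The canonical embedding `ℤ_p = W(𝔽_p) → W(𝔽̄_p)`. -/
noncomputable def iota (p : ℕ) [Fact p.Prime] : ℤ_[p] →+* Wp p :=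
  (WittVector.map (algebraMap (ZMod p) (Fbar p))).comp (WittVector.equiv p).symm.toRingHom

/-- The canonical embedding `W → K`. -/
noncomputable def iotaK (p : ℕ) [Fact p.Prime] : Wp p →+* Kp p := algebraMap (Wp p) (Kp p)

/-- `l`: the unique integer in `{0,…,p−1}` with `a + l ≡ 0 mod p`. -/
noncomputable def dl (p : ℕ) [Fact p.Prime] (a : ℤ_[p]) : ℕ := (-a).appr 1

/-- `q := 4` if `p = 2` and `q := p` otherwise. -/
def qq (p : ℕ) : ℕ := if p = 2 then 4 else p

/-- `l′`: the unique integer in `{0,…,q−1}` with `a + l′ ≡ 0 mod q`. -/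
noncomputable def dl' (p : ℕ) [Fact p.Prime] (a : ℤ_[p]) : ℕ :=
  (-a).appr (if p = 2 then 2 else 1)

/-- `e := l′ − ⌊l′/p⌋`. -/
noncomputable def de (p : ℕ) [Fact p.Prime] (a : ℤ_[p]) : ℕ := dl' p a - dl' p a / p

/-- `a ∈ ℤ_p ∖ ℤ_{≤0}`, i.e. `a` is not a nonpositive rational integer. -/
def NotNonposInt (p : ℕ) [Fact p.Prime] (a : ℤ_[p]) : Prop := ∀ n : ℕ, a + (n : ℤ_[p]) ≠ 0

/-- `a′` is the Dwork prime of `a`, i.e. `p·a′ = a + l`. -/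
def IsDworkPrime (p : ℕ) [Fact p.Prime] (a a' : ℤ_[p]) : Prop :=
  (p : ℤ_[p]) * a' = a + (dl p a : ℤ_[p])

/-- `A k = ((a)_k / k!)^s ∈ ℤ_p`, characterized by `k!^s · A k = ((a)_k)^s`. -/
def IsHGCoeff (p : ℕ) [Fact p.Prime] (s : ℕ) (a : ℤ_[p]) (A : ℕ → ℤ_[p]) : Prop :=
  ∀ k : ℕ, (k.factorial : ℤ_[p]) ^ s * A k = ((ascPochhammer ℤ_[p] k).eval a) ^ s

/-- `f = (α ↦ c^α)` for `c ∈ 1 + pW`: `c^α` is uniquely characterized by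
`c^α ≡ c^{α_n} mod p^n W` for any natural approximation `α_n` of `α` mod `p^n`. -/
def IsCpow (p : ℕ) [Fact p.Prime] (c : Wp p) (f : ℤ_[p] → Wp p) : Prop :=
  ∀ (α : ℤ_[p]) (n : ℕ), f α - c ^ (α.appr n) ∈ Ideal.span {(p : Wp p) ^ n}

/-- The coefficients `B_k` of `Ĝ^{(σ)}_{a,…,a}(t)`, as elements of `K = Frac W`:
`B_k = (k+a)⁻¹ (A_k − (−1)^{se} A^{(1)}_{(k−l)/p} c^{(k−l)/p + a′})`. -/
noncomputable def BhatK (p : ℕ) [Fact p.Prime] (s : ℕ) (a a' : ℤ_[p]) (A A1 : ℕ → ℤ_[p])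
    (cpw : ℤ_[p] → Wp p) (k : ℕ) : Kp p :=
  ((k : Kp p) + iotaK p (iota p a))⁻¹ *
    (iotaK p (iota p (A k)) -
      (if dl p a ≤ k ∧ p ∣ (k - dl p a) then
        (-1 : Kp p) ^ (s * de p a) * iotaK p (iota p (A1 ((k - dl p a) / p))) *
          iotaK p (cpw ((((k - dl p a) / p : ℕ) : ℤ_[p]) + a'))
      else 0))

/-- `B : ℕ → W` is the coefficient function of `Ĝ^{(σ)}_{a,…,a}(t)`, characterized in `W` by
`(k+a)·B_k = A_k − (−1)^{se} A^{(1)}_{(k−l)/p} c^{(k−l)/p + a′}`. -/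
def IsBhat (p : ℕ) [Fact p.Prime] (s : ℕ) (a a' : ℤ_[p]) (A A1 : ℕ → ℤ_[p])
    (cpw : ℤ_[p] → Wp p) (B : ℕ → Wp p) : Prop :=
  ∀ k : ℕ, ((k : Wp p) + iota p a) * B k =
    iota p (A k) -
      (if dl p a ≤ k ∧ p ∣ (k - dl p a) then
        (-1 : Wp p) ^ (s * de p a) * iota p (A1 ((k - dl p a) / p)) *
          cpw ((((k - dl p a) / p : ℕ) : ℤ_[p]) + a')
      else 0)

/-- A function `ℕ → K` is Lipschitz: it takes values in `W` and
`p^m ∣ (n − n′)` implies `f n − f n′ ∈ p^m W`. -/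
def LipschitzSeq (p : ℕ) [Fact p.Prime] (f : ℕ → Kp p) : Prop :=
  (∀ n : ℕ, f n ∈ (iotaK p).range) ∧
    ∀ n n' m : ℕ, ((p : ℤ) ^ m ∣ (n : ℤ) - (n' : ℤ)) →
      ∃ w : Wp p, f n - f n' = (p : Kp p) ^ m * iotaK p w

/-- `L` is the `p`-adic limit of the sequence `s` in `W`. -/
def WLim (p : ℕ) [Fact p.Prime] (s : ℕ → Wp p) (L : Wp p) : Prop :=
  ∀ m : ℕ, ∃ M : ℕ, ∀ n ≥ M, L - s n ∈ Ideal.span {(p : Wp p) ^ m}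

/-- `{α}_k := Π_{1 ≤ i ≤ k, p ∤ (α+i−1)} (α+i−1)`. -/
noncomputable def curly (p : ℕ) [Fact p.Prime] (α : ℤ_[p]) (k : ℕ) : ℤ_[p] :=
  ∏ j ∈ Finset.range k, if (p : ℤ_[p]) ∣ (α + (j : ℤ_[p])) then 1 else (α + (j : ℤ_[p]))

/-- `W/p^n W`. -/
abbrev Qn (p : ℕ) [Fact p.Prime] (n : ℕ) := Wp p ⧸ Ideal.span {(p : Wp p) ^ n}

/-- Laurent polynomials over `W/p^n`, obtained from polynomials over `W`. -/
noncomputable def laurentOfPolyW (p : ℕ) [Fact p.Prime] (n : ℕ) :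
    Polynomial (Wp p) →+* LaurentPolynomial (Qn p n) :=
  (Polynomial.toLaurent).comp
    (Polynomial.mapRingHom (Ideal.Quotient.mk (Ideal.span {(p : Wp p) ^ n})))

/-- `R_n := (W/p^n)[t,t⁻¹, h(t)⁻¹]`, the localization of the Laurent polynomial ring
over `W/p^n` away from (the image of) `h`. -/
abbrev Rn (p : ℕ) [Fact p.Prime] (h : Polynomial (Wp p)) (n : ℕ) :=
  Localization.Away (laurentOfPolyW p n h)

/-- The canonical map from Laurent polynomials over `W/p^n` to `R_n`. -/
noncomputable def mkRn (p : ℕ) [Fact p.Prime] (h : Polynomial (Wp p)) (n : ℕ) :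
    LaurentPolynomial (Qn p n) →+* Rn p h n := algebraMap _ _

/-- The canonical map from polynomials over `W` to `R_n`. -/
noncomputable def toRn (p : ℕ) [Fact p.Prime] (h : Polynomial (Wp p)) (n : ℕ) :
    Polynomial (Wp p) →+* Rn p h n := (mkRn p h n).comp (laurentOfPolyW p n)


section DworkAux
variable (p : ℕ) [Fact p.Prime]
variable (p : ℕ) [Fact p.Prime]

lemma isUnit_of_not_dvd {x : ℤ_[p]} (h : ¬ (p:ℤ_[p]) ∣ x) : IsUnit x := by
  rw [PadicInt.isUnit_iff]
  refine le_antisymm x.2 ?_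
  by_contra hlt
  push_neg at hlt
  exact h ((PadicInt.norm_lt_one_iff_dvd x).mp hlt)

lemma curly_isUnit (α : ℤ_[p]) (k : ℕ) : IsUnit (curly p α k) := by
  refine Finset.prod_induction _ IsUnit (fun _ _ => IsUnit.mul) isUnit_one (fun j _ => ?_)
  split_ifs with h
  · exact isUnit_one
  · exact isUnit_of_not_dvd p h

lemma curly_zero (α : ℤ_[p]) : curly p α 0 = 1 := by simp [curly]

lemma curly_succ (α : ℤ_[p]) (k : ℕ) :
    curly p α (k+1) = curly p α k * (if (p:ℤ_[p]) ∣ (α + (k:ℤ_[p])) then 1 else (α + (k:ℤ_[p]))) := by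
  simp [curly, Finset.prod_range_succ]

lemma curly_add (α : ℤ_[p]) (k N : ℕ) :
    curly p α (k + N) = curly p α k * curly p (α + (k:ℤ_[p])) N := by
  unfold curly
  rw [Finset.prod_range_add]
  congr 1
  refine Finset.prod_congr rfl (fun j _ => ?_)
  push_cast
  rw [add_assoc]

/-- cast divisibility: `p ∣ (j - l : ℤ)` in `ℤ_p` detection -/
lemma dvd_int_iff (m : ℤ) : (p:ℤ_[p]) ∣ (m : ℤ_[p]) ↔ (p:ℤ) ∣ m := by
  constructor
  · intro h
    by_contra hm
    have h1 : ‖((m:ℤ):ℤ_[p])‖ < 1 := (PadicInt.norm_lt_one_iff_dvd _).mpr h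
    exact hm ((PadicInt.norm_int_lt_one_iff_dvd m).mp h1)
  · rintro ⟨c, rfl⟩
    exact ⟨(c:ℤ_[p]), by push_cast; ring⟩

lemma int_dvd_sub_iff {l : ℕ} (hl : l < p) (j : ℕ) :
    (p:ℤ) ∣ (j:ℤ) - (l:ℤ) ↔ j % p = l := by
  have h1 : ((p:ℤ) ∣ (j:ℤ) - (l:ℤ)) ↔ (l:ℤ) % p = (j:ℤ) % p := (Int.modEq_iff_dvd (n := p)).symm
  rw [h1]
  have h2 : (j:ℤ) % (p:ℤ) = ((j % p : ℕ) : ℤ) := by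
    push_cast
    rfl
  have h3 : (l:ℤ) % (p:ℤ) = (l:ℤ) := Int.emod_eq_of_lt (by positivity) (by exact_mod_cast hl)
  rw [h2, h3]
  constructor
  · intro h; exact_mod_cast h.symm
  · intro h; exact_mod_cast h.symm

lemma dvd_shift_iff {a : ℤ_[p]} {l : ℕ} (hl : l < p) (hd : (p:ℤ_[p]) ∣ a + (l:ℤ_[p])) (j : ℕ) :
    (p:ℤ_[p]) ∣ (a + (j:ℤ_[p])) ↔ j % p = l := by
  have key : a + (j:ℤ_[p]) = (a + (l:ℤ_[p])) + (((j:ℤ) - (l:ℤ) : ℤ) : ℤ_[p]) := by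
    push_cast; ring
  rw [key]
  constructor
  · intro h
    have h2 : (p:ℤ_[p]) ∣ (((j:ℤ) - (l:ℤ) : ℤ) : ℤ_[p]) := (dvd_add_right hd).mp h
    exact (int_dvd_sub_iff p hl j).mp ((dvd_int_iff p _).mp h2)
  · intro h
    exact dvd_add hd ((dvd_int_iff p _).mpr ((int_dvd_sub_iff p hl j).mpr h))

/-- `t l k` = number of `j < k` with `j % p = l`. -/
def tcnt (l k : ℕ) : ℕ := k / p + (if l < k % p then 1 else 0)

lemma tcnt_succ {l : ℕ} (hl : l < p) (k : ℕ) :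
    tcnt p l (k+1) = tcnt p l k + (if k % p = l then 1 else 0) := by
  have hp : 0 < p := (Fact.out : p.Prime).pos
  obtain ⟨q, r, hr, hk⟩ : ∃ q r, r < p ∧ k = p * q + r :=
    ⟨k / p, k % p, Nat.mod_lt _ hp, (Nat.div_add_mod k p).symm⟩
  subst hk
  have h1 : (p * q + r) / p = q := by rw [Nat.mul_add_div hp, Nat.div_eq_of_lt hr, add_zero]
  have h2 : (p * q + r) % p = r := by rw [Nat.mul_add_mod, Nat.mod_eq_of_lt hr]
  have h3 : p * q + r + 1 = p * q + (r + 1) := by ring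
  rcases Nat.lt_or_ge (r+1) p with hc | hc
  · have h4 : (p * q + r + 1) / p = q := by
      rw [h3, Nat.mul_add_div hp, Nat.div_eq_of_lt hc, add_zero]
    have h5 : (p * q + r + 1) % p = r + 1 := by
      rw [h3, Nat.mul_add_mod, Nat.mod_eq_of_lt hc]
    unfold tcnt
    rw [h1, h2, h4, h5]
    split_ifs <;> omega
  · have hrp : r + 1 = p := by omega
    have hmul : p * q + r + 1 = p * (q + 1) := by rw [Nat.mul_succ]; omega
    have h4 : (p * q + r + 1) / p = q + 1 := by
      rw [hmul, Nat.mul_div_cancel_left _ hp]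
    have h5 : (p * q + r + 1) % p = 0 := by
      rw [hmul, Nat.mul_mod_right]
    unfold tcnt
    rw [h1, h2, h4, h5]
    split_ifs <;> omega

lemma tcnt_of_mod_lt {l k : ℕ} (h : ¬ l < k % p) : tcnt p l k = k / p := by
  unfold tcnt; rw [if_neg h, add_zero]

/-- pochhammer eval abbreviation -/
noncomputable def PE (b : ℤ_[p]) (k : ℕ) : ℤ_[p] := (ascPochhammer ℤ_[p] k).eval b

lemma PE_zero (b : ℤ_[p]) : PE p b 0 = 1 := by simp [PE]

lemma PE_succ (b : ℤ_[p]) (k : ℕ) : PE p b (k+1) = PE p b k * (b + (k:ℤ_[p])) := by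
  unfold PE
  rw [ascPochhammer_succ_right]
  simp [Polynomial.eval_mul]

lemma PE_one_eq (k : ℕ) : PE p 1 k = (k.factorial : ℤ_[p]) := by
  simpa [PE] using ascPochhammer_eval_one ℤ_[p] k

/-- Main factorization: `(a)_k = {a}_k p^(t k) (a')_(t k)`. -/
lemma poch_factor {a a' : ℤ_[p]} {l : ℕ} (hl : l < p) (hd : (p:ℤ_[p]) * a' = a + (l:ℤ_[p])) :
    ∀ k, PE p a k = curly p a k * (p:ℤ_[p]) ^ (tcnt p l k) * PE p a' (tcnt p l k) := by
  have hdvd : (p:ℤ_[p]) ∣ a + (l:ℤ_[p]) := ⟨a', hd.symm⟩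
  intro k
  induction k with
  | zero => simp [PE_zero, curly_zero, tcnt]
  | succ k ih =>
    rw [PE_succ, curly_succ, tcnt_succ p hl, ih]
    by_cases hc : k % p = l
    · rw [if_pos ((dvd_shift_iff p hl hdvd k).mpr hc), if_pos hc]
      have ht : tcnt p l k = k / p := by
        apply tcnt_of_mod_lt; omega
      have hk : (k:ℤ_[p]) = (p:ℤ_[p]) * ((k/p : ℕ) : ℤ_[p]) + (l:ℤ_[p]) := by
        have := Nat.div_add_mod k p
        rw [hc] at this
        exact_mod_cast congrArg (fun x : ℕ => (x:ℤ_[p])) this.symm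
      have hak : a + (k:ℤ_[p]) = (p:ℤ_[p]) * (a' + ((k/p : ℕ) : ℤ_[p])) := by
        rw [hk, mul_add, hd]; ring
      rw [PE_succ, hak, ht]
      push_cast
      ring
    · rw [if_neg ((dvd_shift_iff p hl hdvd k).not.mpr hc), if_neg hc, add_zero]
      ring

/-- factorial factorization: `k! = {1}_k p^(k/p) (k/p)!`. -/
lemma factorial_factor (k : ℕ) :
    (k.factorial : ℤ_[p]) = curly p 1 k * (p:ℤ_[p]) ^ (k / p) * ((k/p).factorial : ℤ_[p]) := by
  have hp : 2 ≤ p := (Fact.out : p.Prime).two_le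
  have hl : p - 1 < p := by omega
  have hd : (p:ℤ_[p]) * 1 = 1 + ((p-1 : ℕ):ℤ_[p]) := by
    have : ((p-1:ℕ):ℤ_[p]) = (p:ℤ_[p]) - 1 := by
      have : (p - 1) + 1 = p := by omega
      calc ((p-1:ℕ):ℤ_[p]) = (((p-1)+1:ℕ):ℤ_[p]) - 1 := by push_cast; ring
        _ = (p:ℤ_[p]) - 1 := by rw [this]
    rw [this]; ring
  have := poch_factor p hl hd k
  have ht : tcnt p (p-1) k = k / p := by
    apply tcnt_of_mod_lt
    have := Nat.mod_lt k (show 0 < p by omega)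
    omega
  rw [ht] at this
  rw [← PE_one_eq p k, ← PE_one_eq p (k/p)]
  exact this

variable (p : ℕ) [Fact p.Prime]

/-- the unit-with-correction `u_k` with `A k = u_k^s * A1 (k/p)`. -/
noncomputable def uu (a : ℤ_[p]) (l : ℕ) (k : ℕ) : ℤ_[p] :=
  curly p a k * Ring.inverse (curly p 1 k) *
    (a + (l:ℤ_[p]) + (p:ℤ_[p]) * ((k / p : ℕ) : ℤ_[p])) ^ (if l < k % p then 1 else 0)

lemma E_identity {a a' : ℤ_[p]} {l : ℕ} (hl : l < p) (hd : (p:ℤ_[p]) * a' = a + (l:ℤ_[p]))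
    (k : ℕ) :
    (k.factorial : ℤ_[p]) * uu p a l k * PE p a' (k/p) = PE p a k * ((k/p).factorial : ℤ_[p]) := by
  apply (curly_isUnit p 1 k).mul_left_cancel
  have hinv : curly p 1 k * Ring.inverse (curly p 1 k) = 1 :=
    Ring.mul_inverse_cancel _ (curly_isUnit p 1 k)
  have hfac := factorial_factor p k
  have hpa := poch_factor p hl hd k
  unfold tcnt at hpa
  unfold uu
  by_cases hδ : l < k % p
  · rw [if_pos hδ] at hpa ⊢
    have hstep : PE p a' (k/p + 1) = PE p a' (k/p) * (a' + ((k/p:ℕ):ℤ_[p])) := PE_succ p a' (k/p)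
    have hE : a + (l:ℤ_[p]) + (p:ℤ_[p]) * ((k/p:ℕ):ℤ_[p])
        = (p:ℤ_[p]) * (a' + ((k/p:ℕ):ℤ_[p])) := by linear_combination -hd
    rw [hpa, hfac, hstep, hE, pow_one]
    linear_combination (curly p 1 k * curly p a k * ((k/p).factorial : ℤ_[p]) * PE p a' (k/p) *
      (a' + ((k/p:ℕ):ℤ_[p])) * (p:ℤ_[p])^(k/p) * (p:ℤ_[p])) * hinv
  · rw [if_neg hδ] at hpa ⊢
    rw [add_zero] at hpa
    rw [pow_zero, mul_one, hpa, hfac]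
    linear_combination (curly p 1 k * curly p a k * ((k/p).factorial : ℤ_[p]) * PE p a' (k/p) *
      (p:ℤ_[p])^(k/p)) * hinv

lemma keyL1 {s : ℕ} {a a' : ℤ_[p]} {l : ℕ} (hl : l < p)
    (hd : (p:ℤ_[p]) * a' = a + (l:ℤ_[p])) {A A1 : ℕ → ℤ_[p]}
    (hA : IsHGCoeff p s a A) (hA1 : IsHGCoeff p s a' A1) (k : ℕ) :
    A k = (uu p a l k)^s * A1 (k/p) := by
  have hfk : ((k.factorial : ℕ):ℤ_[p]) ≠ 0 := Nat.cast_ne_zero.mpr k.factorial_ne_zero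
  have hfk' : (((k/p).factorial : ℕ):ℤ_[p]) ≠ 0 := Nat.cast_ne_zero.mpr (k/p).factorial_ne_zero
  have hne : (((k/p).factorial:ℤ_[p]))^s * ((k.factorial:ℤ_[p]))^s ≠ 0 :=
    mul_ne_zero (pow_ne_zero _ hfk') (pow_ne_zero _ hfk)
  refine mul_left_cancel₀ hne ?_
  have hAk : (k.factorial : ℤ_[p]) ^ s * A k = (PE p a k) ^ s := hA k
  have hA1k : ((k/p).factorial : ℤ_[p]) ^ s * A1 (k/p) = (PE p a' (k/p)) ^ s := hA1 (k/p)
  have h2 : ((k.factorial : ℤ_[p]) * uu p a l k * PE p a' (k/p))^s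
      = (PE p a k * ((k/p).factorial : ℤ_[p]))^s := by rw [E_identity p hl hd k]
  rw [mul_pow, mul_pow, mul_pow] at h2
  linear_combination (((k/p).factorial:ℤ_[p]))^s * hAk
    - ((k.factorial:ℤ_[p]))^s * (uu p a l k)^s * hA1k - h2

lemma toZModPow_p_pow_zero (n : ℕ) : (PadicInt.toZModPow (p := p) n) ((p:ℤ_[p])^n) = 0 := by
  rw [map_pow, map_natCast]
  have : ((p:ZMod (p^n)))^n = ((p^n : ℕ) : ZMod (p^n)) := by push_cast; rfl
  rw [this, ZMod.natCast_self]

lemma dvd_toZMod {n : ℕ} (hn : 1 ≤ n) (x : ℤ_[p]) :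
    (p:ℤ_[p]) ∣ x ↔ (p : ZMod (p^n)) ∣ PadicInt.toZModPow n x := by
  haveI : NeZero (p^n) := ⟨pow_ne_zero n (Fact.out : p.Prime).pos.ne'⟩
  constructor
  · rintro ⟨c, rfl⟩; exact ⟨_, by rw [map_mul, map_natCast]⟩
  · rintro ⟨y, hy⟩
    have hker : x - (p:ℤ_[p]) * ((y.val : ℕ) : ℤ_[p]) ∈ RingHom.ker (PadicInt.toZModPow (p:=p) n) := by
      rw [RingHom.mem_ker, map_sub, map_mul, map_natCast, map_natCast, ZMod.natCast_val,
        ZMod.cast_id, hy, sub_self]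
    rw [PadicInt.ker_toZModPow, Ideal.mem_span_singleton] at hker
    obtain ⟨z, hz⟩ := hker
    refine ⟨((y.val:ℕ):ℤ_[p]) + (p:ℤ_[p])^(n-1) * z, ?_⟩
    have hq : (p:ℤ_[p]) * (p:ℤ_[p])^(n-1) = (p:ℤ_[p])^n := by
      conv_rhs => rw [show n = (n-1)+1 from by omega]
      rw [pow_succ]; ring
    linear_combination hz - z * hq

lemma window_img (n : ℕ) (hn : 1 ≤ n) (b : ℤ_[p]) :
    PadicInt.toZModPow n (curly p b (p^n)) =
      ∏ x : ZMod (p^n), (if (p : ZMod (p^n)) ∣ x then 1 else x) := by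
  haveI : NeZero (p^n) := ⟨pow_ne_zero n (Fact.out : p.Prime).pos.ne'⟩
  rw [curly, map_prod]
  have hstep : ∀ j ∈ Finset.range (p^n),
      (PadicInt.toZModPow n) (if (p:ℤ_[p]) ∣ (b + (j:ℤ_[p])) then 1 else b + (j:ℤ_[p]))
      = (fun x : ZMod (p^n) => if (p:ZMod (p^n)) ∣ x then 1 else x)
          ((PadicInt.toZModPow n) b + (j : ZMod (p^n))) := by
    intro j _
    have hcond : ((p:ℤ_[p]) ∣ (b + (j:ℤ_[p]))) ↔
        (p:ZMod (p^n)) ∣ ((PadicInt.toZModPow n) b + (j : ZMod (p^n))) := by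
      rw [dvd_toZMod p hn, map_add, map_natCast]
    simp only [apply_ite (PadicInt.toZModPow n), map_one, map_add, map_natCast]
    exact if_congr hcond rfl rfl
  rw [Finset.prod_congr rfl hstep]
  refine Finset.prod_bij' (fun j _ => (PadicInt.toZModPow n) b + (j : ZMod (p^n)))
    (fun x _ => (x - (PadicInt.toZModPow n) b).val)
    (fun j hj => Finset.mem_univ _)
    (fun x _ => Finset.mem_range.mpr (ZMod.val_lt _)) ?_ ?_ (fun j hj => rfl)
  · intro j hj
    show ((PadicInt.toZModPow n) b + (j : ZMod (p^n)) - (PadicInt.toZModPow n) b).val = j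
    rw [add_sub_cancel_left, ZMod.val_cast_of_lt (Finset.mem_range.mp hj)]
  · intro x _
    show (PadicInt.toZModPow n) b + (((x - (PadicInt.toZModPow n) b).val : ℕ) : ZMod (p^n)) = x
    rw [ZMod.natCast_val, ZMod.cast_id]; ring

lemma map_ringInverse {R S : Type*} [CommRing R] [CommRing S] (φ : R →+* S) {x : R}
    (hx : IsUnit x) : φ (Ring.inverse x) = Ring.inverse (φ x) := by
  obtain ⟨v, rfl⟩ := hx
  rw [Ring.inverse_unit]
  calc φ ↑v⁻¹ = ↑((Units.map (φ : R →* S) v)⁻¹) := (Units.coe_map_inv (φ : R →* S) v).symm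
    _ = Ring.inverse ↑(Units.map (φ : R →* S) v) := (Ring.inverse_unit _).symm
    _ = Ring.inverse (φ ↑v) := by rw [Units.coe_map]; rfl

lemma uu_step (a : ℤ_[p]) (l : ℕ) {n : ℕ} (hn : 1 ≤ n) (k : ℕ) :
    uu p a l (k + p^n) - uu p a l k ∈ Ideal.span {(p:ℤ_[p])^n} := by
  have hp : 0 < p := (Fact.out : p.Prime).pos
  have hpn : p^n = p^(n-1) * p := by
    rw [← pow_succ]; congr 1; omega
  have hmod : (k + p^n) % p = k % p := by rw [hpn, ← Nat.add_mul_mod_self_right k (p^(n-1)) p]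
  have hdiv : (k + p^n) / p = k / p + p^(n-1) := by rw [hpn, Nat.add_mul_div_right _ _ hp]
  have hsplit_a : curly p a (k + p^n) = curly p a k * curly p (a + (k:ℤ_[p])) (p^n) :=
    curly_add p a k (p^n)
  have hsplit_1 : curly p 1 (k + p^n) = curly p 1 k * curly p (1 + (k:ℤ_[p])) (p^n) :=
    curly_add p 1 k (p^n)
  rw [← PadicInt.ker_toZModPow n, RingHom.mem_ker, map_sub, sub_eq_zero]
  unfold uu
  rw [hmod, hdiv, hsplit_a, hsplit_1]
  have hWa : PadicInt.toZModPow n (curly p (a + (k:ℤ_[p])) (p^n))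
      = PadicInt.toZModPow n (curly p (1 + (k:ℤ_[p])) (p^n)) := by
    rw [window_img p n hn, window_img p n hn]
  have hC1 := curly_isUnit p 1 k
  have hW1 := curly_isUnit p (1 + (k:ℤ_[p])) (p^n)
  have hq : (p:ℤ_[p]) * (p:ℤ_[p])^(n-1) = (p:ℤ_[p])^n := by
    conv_rhs => rw [show n = (n-1)+1 from by omega]
    rw [pow_succ]; ring
  have hE : (a + (l:ℤ_[p]) + (p:ℤ_[p]) * ((k/p + p^(n-1) : ℕ):ℤ_[p]))
      = (a + (l:ℤ_[p]) + (p:ℤ_[p]) * ((k/p : ℕ):ℤ_[p])) + (p:ℤ_[p])^n := by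
    push_cast
    linear_combination hq
  rw [hE]
  have hEmap : (PadicInt.toZModPow (p := p) n)
      ((a + (l:ℤ_[p]) + (p:ℤ_[p]) * ((k/p:ℕ):ℤ_[p])) + (p:ℤ_[p])^n)
      = (PadicInt.toZModPow n) (a + (l:ℤ_[p]) + (p:ℤ_[p]) * ((k/p:ℕ):ℤ_[p])) := by
    rw [map_add, toZModPow_p_pow_zero, add_zero]
  simp only [map_mul, map_pow, hEmap, map_ringInverse _ (hC1.mul hW1),
    map_ringInverse _ hC1, map_ringInverse _ hW1, hWa, Ring.mul_inverse_rev]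
  have hcan : PadicInt.toZModPow n (curly p (1 + (k:ℤ_[p])) (p^n)) *
      Ring.inverse (PadicInt.toZModPow n (curly p (1 + (k:ℤ_[p])) (p^n))) = 1 :=
    Ring.mul_inverse_cancel _ (hW1.map (PadicInt.toZModPow n))
  linear_combination (PadicInt.toZModPow n (curly p a k) *
    Ring.inverse (PadicInt.toZModPow n (curly p 1 k)) *
    (PadicInt.toZModPow n (a + (l:ℤ_[p]) + (p:ℤ_[p]) * ((k/p : ℕ):ℤ_[p])))^(if l < k % p then 1 else 0)) * hcan

lemma keyL2 {s : ℕ} {a a' : ℤ_[p]} {l : ℕ} (hl : l < p)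
    (hd : (p:ℤ_[p]) * a' = a + (l:ℤ_[p])) {A A1 : ℕ → ℤ_[p]}
    (hA : IsHGCoeff p s a A) (hA1 : IsHGCoeff p s a' A1) {n : ℕ} (hn : 1 ≤ n) (k : ℕ) :
    ∃ e : ℤ_[p], A (k + p^n) = (uu p a l k)^s * A1 (k/p + p^(n-1)) + (p:ℤ_[p])^n * e := by
  have h1 := keyL1 p hl hd hA hA1 (k + p^n)
  have hdiv : (k + p^n) / p = k / p + p^(n-1) := by
    rw [show p^n = p^(n-1) * p from by rw [← pow_succ]; congr 1; omega,
      Nat.add_mul_div_right _ _ (Fact.out : p.Prime).pos]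
  rw [hdiv] at h1
  have h2 := uu_step p a l hn k
  rw [Ideal.mem_span_singleton] at h2
  have h3 : (p:ℤ_[p])^n ∣ (uu p a l (k+p^n))^s - (uu p a l k)^s :=
    dvd_trans h2 (sub_dvd_pow_sub_pow _ _ s)
  obtain ⟨e, he⟩ := h3
  exact ⟨e * A1 (k/p + p^(n-1)), by rw [h1]; linear_combination A1 (k/p + p^(n-1)) * he⟩

lemma PE_ne_zero {b : ℤ_[p]} (hb : NotNonposInt p b) (k : ℕ) : PE p b k ≠ 0 := by
  induction k with
  | zero => rw [PE_zero]; exact one_ne_zero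
  | succ k ih => rw [PE_succ]; exact mul_ne_zero ih (hb k)

lemma A_ne_zero {s : ℕ} {b : ℤ_[p]} {A : ℕ → ℤ_[p]} (hs : 1 ≤ s)
    (hb : NotNonposInt p b) (hA : IsHGCoeff p s b A) (k : ℕ) : A k ≠ 0 := by
  intro h0
  have := hA k
  rw [h0, mul_zero] at this
  exact pow_ne_zero s (PE_ne_zero p hb k) this.symm

lemma dwork_prime_notNonpos {a a' : ℤ_[p]} {l : ℕ}
    (ha : NotNonposInt p a) (hd : (p:ℤ_[p]) * a' = a + (l:ℤ_[p])) : NotNonposInt p a' := by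
  intro n h0
  apply ha (l + p * n)
  have : a + ((l + p * n : ℕ):ℤ_[p]) = (p:ℤ_[p]) * (a' + (n:ℤ_[p])) := by
    push_cast
    linear_combination -hd
  rw [this, h0, mul_zero]


end DworkAux

/-- `S_m ≡ Σ_{i+j=m} (A^{(1)}_{⌊j/p⌋} A^{(1)}_{⌊i/p⌋+p^{n−1}} −
A^{(1)}_{⌊i/p⌋} A^{(1)}_{⌊j/p⌋+p^{n−1}}) · (A_i/A^{(1)}_{⌊i/p⌋}) · (A_j/A^{(1)}_{⌊j/p⌋}) ·
(B_j/A_j) mod p^n W`. -/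
theorem statement14 (p : ℕ) [Fact p.Prime] (s : ℕ) (hs : 1 ≤ s)
    (a a' : ℤ_[p]) (ha : NotNonposInt p a) (ha' : IsDworkPrime p a a')
    (A A1 : ℕ → ℤ_[p]) (hA : IsHGCoeff p s a A) (hA1 : IsHGCoeff p s a' A1)
    (B : ℕ → Wp p)
    (hLip : LipschitzSeq p (fun k => iotaK p (B k) / iotaK p (iota p (A k)))) :
    ∀ (m n : ℕ), 1 ≤ n →
      ∃ w : Wp p,
        iotaK p (∑ i ∈ Finset.range (m + 1),
            (iota p (A (i + p ^ n)) * B (m - i) - iota p (A i) * B (m - i + p ^ n))) -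
          (∑ i ∈ Finset.range (m + 1),
            (iotaK p (iota p (A1 ((m - i) / p))) * iotaK p (iota p (A1 (i / p + p ^ (n - 1)))) -
              iotaK p (iota p (A1 (i / p))) * iotaK p (iota p (A1 ((m - i) / p + p ^ (n - 1))))) *
              (iotaK p (iota p (A i)) / iotaK p (iota p (A1 (i / p)))) *
              (iotaK p (iota p (A (m - i))) / iotaK p (iota p (A1 ((m - i) / p)))) *
              (iotaK p (B (m - i)) / iotaK p (iota p (A (m - i))))) =
        (p : Kp p) ^ n * iotaK p w := by
  intro m n hn
  set l := dl p a with hldef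
  have hl : l < p := by
    have := PadicInt.appr_lt (-a) 1
    rwa [pow_one] at this
  have hd : (p:ℤ_[p]) * a' = a + (l:ℤ_[p]) := ha'
  have ha'n : NotNonposInt p a' := dwork_prime_notNonpos p ha hd
  have hιinj : Function.Injective (iota p) := by
    intro x y hxy
    apply (WittVector.equiv p).symm.injective
    exact WittVector.map_injective (p := p) _ ((algebraMap (ZMod p) (Fbar p)).injective) hxy
  have hκinj : Function.Injective (iotaK p) := IsFractionRing.injective (Wp p) (Kp p)
  have hne : ∀ x : ℤ_[p], x ≠ 0 → iotaK p (iota p x) ≠ 0 := by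
    intro x hx h0
    exact hx (hιinj (hκinj (by rw [h0, map_zero, map_zero])))
  have hA1ne : ∀ t, A1 t ≠ 0 := fun t => A_ne_zero p hs ha'n hA1 t
  have hAne : ∀ t, A t ≠ 0 := fun t => A_ne_zero p hs ha hA t
  have hr0 : ∀ k, ∃ w, iotaK p (B k) / iotaK p (iota p (A k)) = iotaK p w := by
    intro k
    obtain ⟨w, hw⟩ := hLip.1 k
    exact ⟨w, hw.symm⟩
  choose r hr using hr0
  have hBr : ∀ k, B k = r k * iota p (A k) := by
    intro k
    apply hκinj
    rw [map_mul, ← hr k]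
    exact (div_mul_cancel₀ _ (hne _ (hAne k))).symm
  have key : ∀ i : ℕ, ∃ z : Wp p,
      iotaK p (iota p (A (i + p ^ n)) * B (m - i) - iota p (A i) * B (m - i + p ^ n)) -
        (iotaK p (iota p (A1 ((m - i) / p))) * iotaK p (iota p (A1 (i / p + p ^ (n - 1)))) -
          iotaK p (iota p (A1 (i / p))) * iotaK p (iota p (A1 ((m - i) / p + p ^ (n - 1))))) *
          (iotaK p (iota p (A i)) / iotaK p (iota p (A1 (i / p)))) *
          (iotaK p (iota p (A (m - i))) / iotaK p (iota p (A1 ((m - i) / p)))) *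
          (iotaK p (B (m - i)) / iotaK p (iota p (A (m - i)))) = (p:Kp p)^n * iotaK p z := by
    intro i
    set j := m - i with hj
    have hL1i := keyL1 p hl hd hA hA1 i
    have hL1j := keyL1 p hl hd hA hA1 j
    obtain ⟨ei, hei⟩ := keyL2 p hl hd hA hA1 hn i
    obtain ⟨ej, hej⟩ := keyL2 p hl hd hA hA1 hn j
    obtain ⟨w2, hw2⟩ := hLip.2 (j + p^n) j n ⟨1, by push_cast; ring⟩
    simp only [hr] at hw2
    have hw2' : r (j + p^n) = r j + (p:Wp p)^n * w2 := by
      apply hκinj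
      rw [map_add, map_mul, map_pow, map_natCast]
      linear_combination hw2
    have h1 : iota p (A (i + p^n)) = (iota p (uu p a l i))^s * iota p (A1 (i/p + p^(n-1)))
        + (p:Wp p)^n * iota p ei := by
      have := congrArg (iota p) hei
      simpa only [map_add, map_mul, map_pow, map_natCast] using this
    have h2 : iota p (A (j + p^n)) = (iota p (uu p a l j))^s * iota p (A1 (j/p + p^(n-1)))
        + (p:Wp p)^n * iota p ej := by
      have := congrArg (iota p) hej
      simpa only [map_add, map_mul, map_pow, map_natCast] using this
    have h3 : iota p (A i) = (iota p (uu p a l i))^s * iota p (A1 (i/p)) := by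
      have := congrArg (iota p) hL1i
      simpa only [map_mul, map_pow] using this
    have h4 : iota p (A j) = (iota p (uu p a l j))^s * iota p (A1 (j/p)) := by
      have := congrArg (iota p) hL1j
      simpa only [map_mul, map_pow] using this
    have h5 : B j = r j * iota p (A j) := hBr j
    have h6 : B (j + p^n) = (r j + (p:Wp p)^n * w2) * iota p (A (j + p^n)) := by
      rw [hBr (j + p^n), hw2']
    have hdiv_i : iotaK p (iota p (A i)) / iotaK p (iota p (A1 (i/p)))
        = iotaK p ((iota p (uu p a l i))^s) := by
      rw [h3, map_mul, mul_div_cancel_right₀ _ (hne _ (hA1ne (i/p)))]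
    have hdiv_j : iotaK p (iota p (A j)) / iotaK p (iota p (A1 (j/p)))
        = iotaK p ((iota p (uu p a l j))^s) := by
      rw [h4, map_mul, mul_div_cancel_right₀ _ (hne _ (hA1ne (j/p)))]
    refine ⟨iota p ei * r j * (iota p (uu p a l j))^s * iota p (A1 (j/p))
        - (iota p (uu p a l i))^s * iota p (A1 (i/p)) * r j * iota p ej
        - (iota p (uu p a l i))^s * iota p (A1 (i/p)) * w2 * (iota p (uu p a l j))^s *
            iota p (A1 (j/p + p^(n-1)))
        - (p:Wp p)^n * ((iota p (uu p a l i))^s * iota p (A1 (i/p)) * w2 * iota p ej), ?_⟩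
    have hy : iota p (A (i + p^n)) * B j - iota p (A i) * B (j + p^n)
        - ((iota p (A1 (j/p)) * iota p (A1 (i/p + p^(n-1)))
            - iota p (A1 (i/p)) * iota p (A1 (j/p + p^(n-1))))
          * (iota p (uu p a l i))^s * (iota p (uu p a l j))^s * r j)
        = (p:Wp p)^n * (iota p ei * r j * (iota p (uu p a l j))^s * iota p (A1 (j/p))
        - (iota p (uu p a l i))^s * iota p (A1 (i/p)) * r j * iota p ej
        - (iota p (uu p a l i))^s * iota p (A1 (i/p)) * w2 * (iota p (uu p a l j))^s *
            iota p (A1 (j/p + p^(n-1)))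
        - (p:Wp p)^n * ((iota p (uu p a l i))^s * iota p (A1 (i/p)) * w2 * iota p ej)) := by
      rw [h1, h6, h2, h5, h4, h3]
      ring
    rw [hdiv_i, hdiv_j, hr j,
      show (p:Kp p)^n * iotaK p (iota p ei * r j * (iota p (uu p a l j))^s * iota p (A1 (j/p))
        - (iota p (uu p a l i))^s * iota p (A1 (i/p)) * r j * iota p ej
        - (iota p (uu p a l i))^s * iota p (A1 (i/p)) * w2 * (iota p (uu p a l j))^s *
            iota p (A1 (j/p + p^(n-1)))
        - (p:Wp p)^n * ((iota p (uu p a l i))^s * iota p (A1 (i/p)) * w2 * iota p ej))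
        = iotaK p ((p:Wp p)^n * (iota p ei * r j * (iota p (uu p a l j))^s * iota p (A1 (j/p))
        - (iota p (uu p a l i))^s * iota p (A1 (i/p)) * r j * iota p ej
        - (iota p (uu p a l i))^s * iota p (A1 (i/p)) * w2 * (iota p (uu p a l j))^s *
            iota p (A1 (j/p + p^(n-1)))
        - (p:Wp p)^n * ((iota p (uu p a l i))^s * iota p (A1 (i/p)) * w2 * iota p ej)))
        from by rw [map_mul, map_pow, map_natCast], ← hy]
    simp only [map_sub, map_mul, map_pow]
  choose z hz using key
  refine ⟨∑ i ∈ Finset.range (m + 1), z i, ?_⟩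
  rw [map_sum, map_sum, Finset.mul_sum, ← Finset.sum_sub_distrib]
  exact Finset.sum_congr rfl (fun i _ => hz i)

end HGP
end

section
/- Let p be a prime, s ∈ ℤ_{≥1}, a ∈ ℤ_p, and l ∈ {0,…,p−1} the unique integer with a + l ≡ 0 mod p. Then the reduction F̄(t) ∈ 𝔽_p[t] of F_{a,…,a}(t)_{<p} modulo p has degree exactly l and satisfies F̄(t) = (−1)^{ls} t^l F̄(t^{−1}); equivalently, ((a)_i/i!)^s ≡ (−1)^{ls} ((a)_j/j!)^s mod p whenever i + j = l with i, j ≥ 0, and ((a)_k/k!)^s ≡ 0 mod p for l < k ≤ p−1. -/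
/-!
Reducing modulo `p`, the integer `a` becomes `-l`, and `(-l)_k = (-1)^k l!/(l-k)!`. Hence
`k!^s A_k ≡ (-1)^{ks} (l!/(l-k)!)^s`, which vanishes for `l < k` and, for `i + j = l`, gives
`(i! j!)^s A_i ≡ (-1)^{is} l!^s` and `(i! j!)^s A_j ≡ (-1)^{js} l!^s`. Since `i, j, k < p`
the factorials are units in `𝔽_p`, and dividing them out gives the congruences.
-/

open scoped Classical

namespace HGP

open Polynomial
open scoped Nat

section Reflection

variable {R : Type*} [CommRing R] {s l : ℕ} {x : ℕ → R}

theorem ascPochhammer_eval_neg_natCast (m l : ℕ) :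
    (ascPochhammer R m).eval (-(l : R)) = (-1) ^ m * (l.descFactorial m : R) := by
  rw [ascPochhammer_eval_neg_eq_descPochhammer, descPochhammer_eval_eq_descFactorial]

theorem factorial_mul_factorial_pow_mul_hgCoeff_neg_natCast
    (hx : ∀ k, (k ! : R) ^ s * x k = ((ascPochhammer R k).eval (-(l : R))) ^ s)
    {m n : ℕ} (hmn : m + n = l) :
    ((m ! * n ! : ℕ) : R) ^ s * x m = (-1) ^ (m * s) * (l ! : R) ^ s := by
  subst hmn
  have hfac : n ! * (m + n).descFactorial m = (m + n) ! := by
    simpa only [Nat.add_sub_cancel_left] using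
      Nat.factorial_mul_descFactorial (Nat.le_add_right m n)
  calc ((m ! * n ! : ℕ) : R) ^ s * x m = (n ! : R) ^ s * ((m ! : R) ^ s * x m) := by
        push_cast; ring
    _ = (n ! : R) ^ s * ((-1) ^ m * ((m + n).descFactorial m : R)) ^ s := by
        rw [hx, ascPochhammer_eval_neg_natCast]
    _ = (-1) ^ (m * s) * ((n ! * (m + n).descFactorial m : ℕ) : R) ^ s := by
        push_cast; ring
    _ = (-1) ^ (m * s) * ((m + n) ! : R) ^ s := by rw [hfac]

variable (p : ℕ) [Fact p.Prime] [CharP R p]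

theorem natCast_factorial_ne_zero {k : ℕ} (hk : k < p) : (k ! : R) ≠ 0 := by
  rw [Ne, CharP.cast_eq_zero_iff R p, (Fact.out : p.Prime).dvd_factorial]
  omega

variable [IsDomain R]

theorem hgCoeff_neg_natCast_reflect
    (hx : ∀ k, (k ! : R) ^ s * x k = ((ascPochhammer R k).eval (-(l : R))) ^ s)
    (hl : l < p) {i j : ℕ} (hij : i + j = l) :
    x i = (-1) ^ (l * s) * x j := by
  have hC : ((i ! * j ! : ℕ) : R) ^ s ≠ 0 := by
    push_cast
    exact pow_ne_zero _ (mul_ne_zero (natCast_factorial_ne_zero p (by omega))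
      (natCast_factorial_ne_zero p (by omega)))
  have hsign : ((-1 : R)) ^ (l * s) * (-1) ^ (j * s) = (-1) ^ (i * s) := by
    rw [← pow_add, ← hij, show (i + j) * s + j * s = i * s + 2 * (j * s) by ring, pow_add,
      (even_two_mul _).neg_one_pow, mul_one]
  have hj := factorial_mul_factorial_pow_mul_hgCoeff_neg_natCast hx (show j + i = l by omega)
  rw [Nat.mul_comm j !] at hj
  refine mul_left_cancel₀ hC ?_
  rw [factorial_mul_factorial_pow_mul_hgCoeff_neg_natCast hx hij,
    mul_left_comm _ ((-1) ^ (l * s)), hj, ← mul_assoc, hsign]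

theorem hgCoeff_neg_natCast_eq_zero_of_lt
    (hx : ∀ k, (k ! : R) ^ s * x k = ((ascPochhammer R k).eval (-(l : R))) ^ s)
    (hs : s ≠ 0) {k : ℕ} (hlk : l < k) (hkp : k < p) :
    x k = 0 := by
  have h := hx k
  rw [ascPochhammer_eval_neg_natCast, Nat.descFactorial_eq_zero_iff_lt.mpr hlk, Nat.cast_zero,
    mul_zero, zero_pow hs] at h
  exact (mul_eq_zero.mp h).resolve_left (pow_ne_zero _ (natCast_factorial_ne_zero p hkp))

end Reflection

section Reduction

variable {p : ℕ} [Fact p.Prime]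

theorem PadicInt.mem_span_p_iff_toZMod_eq_zero {x : ℤ_[p]} :
    x ∈ Ideal.span {(p : ℤ_[p])} ↔ PadicInt.toZMod x = 0 := by
  rw [← PadicInt.maximalIdeal_eq_span_p, ← PadicInt.ker_toZMod, RingHom.mem_ker]

theorem dl_lt (a : ℤ_[p]) : dl p a < p := by
  simpa [dl] using PadicInt.appr_lt (-a) 1

theorem toZMod_eq_neg_dl (a : ℤ_[p]) : PadicInt.toZMod a = -(dl p a : ZMod p) := by
  have h := PadicInt.mem_span_p_iff_toZMod_eq_zero.mp
    (pow_one (p : ℤ_[p]) ▸ PadicInt.appr_spec 1 (-a))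
  rw [map_sub, map_neg, map_natCast, sub_eq_zero] at h
  rw [dl, ← h, neg_neg]

theorem IsHGCoeff.toZMod {s : ℕ} {a : ℤ_[p]} {A : ℕ → ℤ_[p]} (hA : IsHGCoeff p s a A) (k : ℕ) :
    (k ! : ZMod p) ^ s * PadicInt.toZMod (A k) =
      ((ascPochhammer (ZMod p) k).eval (-(dl p a : ZMod p))) ^ s := by
  have h := congrArg PadicInt.toZMod (hA k)
  rwa [map_mul, map_pow, map_pow, map_natCast, ← eval₂_at_apply,
    ← ascPochhammer_eval₂, toZMod_eq_neg_dl a] at h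

end Reduction

/-- the reduction mod `p` of `F_{a,…,a}(t)_{<p}` has degree `l` and equals its
own reversal up to the sign `(−1)^{ls}`; explicitly, `((a)_i/i!)^s ≡ (−1)^{ls} ((a)_j/j!)^s
mod p` whenever `i + j = l`, and `((a)_k/k!)^s ≡ 0 mod p` for `l < k ≤ p−1`. -/
theorem statement15 (p : ℕ) [Fact p.Prime] (s : ℕ) (hs : 1 ≤ s)
    (a : ℤ_[p]) (A : ℕ → ℤ_[p]) (hA : IsHGCoeff p s a A) :
    (∀ i j : ℕ, i + j = dl p a →
      A i - (-1 : ℤ_[p]) ^ (dl p a * s) * A j ∈ Ideal.span {(p : ℤ_[p])}) ∧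
    (∀ k : ℕ, dl p a < k → k ≤ p - 1 → A k ∈ Ideal.span {(p : ℤ_[p])}) := by
  have hp_pos := (Fact.out : p.Prime).pos
  simp only [PadicInt.mem_span_p_iff_toZMod_eq_zero, map_sub, map_mul, map_pow, map_neg,
    map_one, sub_eq_zero]
  exact ⟨fun i j hij => hgCoeff_neg_natCast_reflect p hA.toZMod (dl_lt a) hij,
    fun k hlk hkp => hgCoeff_neg_natCast_eq_zero_of_lt p hA.toZMod (by omega) hlk (by omega)⟩

end HGP
end
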